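/- Let ≺ be a transitive relation on ℕ and let RI(≺) be the space of rounded ideals of ≺. Then overt choice for RI(≺) is continuous: there exists a continuous function F, defined on the subspace of Baire space consisting of all p : ℕ → ℕ that enumerate the set {n ∈ ℕ | ∃ I ∈ A, n ∈ I} for some nonempty subset A of RI(≺) that is closed in RI(≺), such that whenever p enumerates {n ∈ ℕ | ∃ I ∈ A, n ∈ I} for such an A, the set enumerated by F p is a rounded ideal belonging to A. -/

import Mathlib

/-!
From an enumeration `p` of `⋃ A` we greedily extract a chain `a₀ ≺ a₁ ≺ ⋯` in `⋃ A`: `aₖ₊₁` is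
the first element listed by `p` above `aₖ`, which exists because every member of `A` is directed.
The chosen ideal is `J = {x | ∃ k, x ≺ aₖ}`. Each `aₖ` lies in some `Iₖ ∈ A`, and every `x ∈ J`
lies in `Iₖ` for all large `k`, so `Iₖ → J` in the Sierpiński product topology and `J ∈ A` since
`A` is closed. Each `aₖ` depends only on an initial segment of `p`, which makes `p ↦ J`
continuous.
-/

/-- `p` enumerates `S` if `S = {n | ∃ k, p k = n + 1}`. -/
def Enumerates (p : ℕ → ℕ) (S : Set ℕ) : Prop := S = {n | ∃ k, p k = n + 1}

/-- A rounded ideal for a transitive relation on ℕ: nonempty, downward closed, directed. -/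
def IsRoundedIdeal (r : ℕ → ℕ → Prop) (I : ℕ → Prop) : Prop :=
  (∃ n, I n) ∧ (∀ x y, r x y → I y → I x) ∧
    (∀ x, I x → ∀ y, I y → ∃ z, I z ∧ r x z ∧ r y z)

/-- The space of rounded ideals, as a subspace of `ℕ → Prop` (with the product of
Sierpiński topologies). -/
abbrev RI (r : ℕ → ℕ → Prop) := {I : ℕ → Prop // IsRoundedIdeal r I}

open Filter Topology

theorem eventually_forall_le_apply_eq {X : Type*} [TopologicalSpace X] [DiscreteTopology X]
    (p : ℕ → X) (N : ℕ) : ∀ᶠ q in 𝓝 p, ∀ k ≤ N, q k = p k :=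
  (Set.finite_Iic N).eventually_all.2 fun k _ =>
    (continuous_apply k).continuousAt ((isOpen_discrete {p k}).mem_nhds rfl)

theorem continuousAt_of_eventually_apply_eq {X ι : Type*} {Y : ι → Type*} [TopologicalSpace X]
    [∀ i, TopologicalSpace (Y i)] [∀ i, DiscreteTopology (Y i)] {F : X → ∀ i, Y i} {x : X}
    (h : ∀ i, ∀ᶠ y in 𝓝 x, F y i = F x i) : ContinuousAt F x :=
  continuousAt_pi.2 fun i => by
    rw [ContinuousAt, nhds_discrete (Y i)]
    exact tendsto_pure.2 (h i)

theorem tendsto_nhds_pi_Prop {ι α : Type*} {l : Filter ι} {I : ι → α → Prop} {J : α → Prop} :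
    Tendsto I l (𝓝 J) ↔ ∀ x, J x → ∀ᶠ k in l, I k x := by
  simp only [tendsto_pi_nhds, tendsto_nhds_Prop]

section Enumeration

def enumerated (p : ℕ → ℕ) : Set ℕ := {n | ∃ k, p k = n + 1}

open Classical in
noncomputable def enumProj (R : ℕ → ℕ → Prop) (m : ℕ) : ℕ :=
  if R m.unpair.1 m.unpair.2 then m.unpair.1 + 1 else 0

theorem enumerates_enumProj (R : ℕ → ℕ → Prop) : Enumerates (enumProj R) {n | ∃ k, R n k} := by
  ext n
  simp only [Set.mem_ofPred_eq, enumProj]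
  constructor
  · rintro ⟨k, hk⟩
    exact ⟨Nat.pair n k, by simp [hk]⟩
  · rintro ⟨m, hm⟩
    split_ifs at hm with h
    · exact ⟨m.unpair.2, Nat.succ_injective hm ▸ h⟩

/-- The first element satisfying `P` in the order in which `p` lists `enumerated p`;
junk if there is none. -/
noncomputable def firstEnumerated (p : ℕ → ℕ) (P : ℕ → Prop) : ℕ :=
  p (sInf {k | ∃ n, p k = n + 1 ∧ P n}) - 1

variable {p : ℕ → ℕ} {P : ℕ → Prop}

theorem firstEnumerated_spec (h : ∃ n ∈ enumerated p, P n) :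
    firstEnumerated p P ∈ enumerated p ∧ P (firstEnumerated p P) := by
  obtain ⟨n, ⟨k, hk⟩, hn⟩ := h
  obtain ⟨m, hm, hPm⟩ := Nat.sInf_mem (s := {k | ∃ n, p k = n + 1 ∧ P n}) ⟨k, n, hk, hn⟩
  simp only [firstEnumerated, hm, Nat.add_sub_cancel]
  exact ⟨⟨_, hm⟩, hPm⟩

theorem eventually_firstEnumerated_eq (h : ∃ n ∈ enumerated p, P n) :
    ∀ᶠ q in 𝓝 p, firstEnumerated q P = firstEnumerated p P := by
  obtain ⟨n, ⟨k, hk⟩, hn⟩ := h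
  set T : (ℕ → ℕ) → Set ℕ := fun q => {k | ∃ n, q k = n + 1 ∧ P n}
  have hT : (T p).Nonempty := ⟨k, n, hk, hn⟩
  filter_upwards [eventually_forall_le_apply_eq p (sInf (T p))] with q hq
  have hagree : ∀ j ≤ sInf (T p), j ∈ T q ↔ j ∈ T p := fun j hj => by
    simp only [T, Set.mem_ofPred_eq, hq j hj]
  have hmem : sInf (T p) ∈ T q := (hagree _ le_rfl).2 (Nat.sInf_mem hT)
  have hle : sInf (T q) ≤ sInf (T p) := Nat.sInf_le hmem
  have hsInf : sInf (T q) = sInf (T p) :=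
    le_antisymm hle (Nat.sInf_le ((hagree _ hle).1 (Nat.sInf_mem ⟨_, hmem⟩)))
  simp only [firstEnumerated, T] at hsInf ⊢
  rw [hsInf, hq _ le_rfl]

end Enumeration

section GreedyChain

variable {r : ℕ → ℕ → Prop}

noncomputable def greedyChain (r : ℕ → ℕ → Prop) (p : ℕ → ℕ) : ℕ → ℕ
  | 0 => firstEnumerated p fun _ => True
  | k + 1 => firstEnumerated p (r (greedyChain r p k))

variable {p : ℕ → ℕ} (hne : (enumerated p).Nonempty)
  (hstep : ∀ x ∈ enumerated p, ∃ y ∈ enumerated p, r x y)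
include hne hstep

theorem greedyChain_mem (k : ℕ) : greedyChain r p k ∈ enumerated p := by
  cases k with
  | zero =>
    obtain ⟨n, hn⟩ := hne
    exact (firstEnumerated_spec ⟨n, hn, trivial⟩).1
  | succ k => exact (firstEnumerated_spec (hstep _ (greedyChain_mem k))).1

theorem greedyChain_rel_succ (k : ℕ) : r (greedyChain r p k) (greedyChain r p (k + 1)) :=
  (firstEnumerated_spec (hstep _ (greedyChain_mem hne hstep k))).2

theorem eventually_greedyChain_eq (k : ℕ) :
    ∀ᶠ q in 𝓝 p, greedyChain r q k = greedyChain r p k := by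
  induction k with
  | zero =>
    obtain ⟨n, hn⟩ := hne
    exact eventually_firstEnumerated_eq ⟨n, hn, trivial⟩
  | succ k ih =>
    filter_upwards [ih, eventually_firstEnumerated_eq (hstep _ (greedyChain_mem hne hstep k))]
      with q hk hfirst
    rw [greedyChain, hk, hfirst, greedyChain]

end GreedyChain

section RoundedIdeal

variable {r : ℕ → ℕ → Prop} [IsTrans ℕ r] {a : ℕ → ℕ} (ha : ∀ k, r (a k) (a (k + 1)))
include ha

theorem isRoundedIdeal_below_chain : IsRoundedIdeal r fun x => ∃ k, r x (a k) :=
  ⟨⟨a 0, 1, ha 0⟩, fun _ _ hxy ⟨k, hk⟩ => ⟨k, trans_of r hxy hk⟩,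
    fun _ ⟨i, hi⟩ _ ⟨j, hj⟩ => ⟨a (i + j + 1), ⟨_, ha _⟩,
      trans_of r hi (Nat.rel_of_forall_rel_succ_of_lt r ha (by omega)),
      trans_of r hj (Nat.rel_of_forall_rel_succ_of_lt r ha (by omega))⟩⟩

theorem below_chain_mem_of_isClosed {A : Set (RI r)} (hA : IsClosed A)
    (haA : ∀ k, ∃ I ∈ A, I.1 (a k)) :
    (⟨fun x => ∃ k, r x (a k), isRoundedIdeal_below_chain ha⟩ : RI r) ∈ A := by
  choose I hIA hI using haA
  refine hA.mem_of_tendsto (b := atTop) (tendsto_subtype_rng.2 (tendsto_nhds_pi_Prop.2 ?_))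
    (Eventually.of_forall hIA)
  rintro x ⟨k, hk⟩
  filter_upwards [eventually_gt_atTop k] with K hK
  exact (I K).2.2.1 _ _ (trans_of r hk (Nat.rel_of_forall_rel_succ_of_lt r ha hK)) (hI K)

end RoundedIdeal

theorem enumerated_nonempty_and_exists_rel {r : ℕ → ℕ → Prop} {p : ℕ → ℕ} {A : Set (RI r)}
    (hA : A.Nonempty) (hU : Enumerates p {n | ∃ I ∈ A, I.1 n}) :
    (enumerated p).Nonempty ∧ ∀ x ∈ enumerated p, ∃ y ∈ enumerated p, r x y := by
  change _ = enumerated p at hU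
  rw [← hU]
  obtain ⟨I, hI⟩ := hA
  refine ⟨I.2.1.imp fun n hn => ⟨I, hI, hn⟩, ?_⟩
  rintro x ⟨J, hJ, hx⟩
  obtain ⟨z, hz, hxz, -⟩ := J.2.2.2 x hx x hx
  exact ⟨z, ⟨J, hJ, hz⟩, hxz⟩

theorem overt_choice_roundedIdeals_continuous (r : ℕ → ℕ → Prop) (hr : Transitive r) :
    ∃ F : (ℕ → ℕ) → (ℕ → ℕ),
      ContinuousOn F {p | ∃ A : Set (RI r), A.Nonempty ∧ IsClosed A ∧
        Enumerates p {n | ∃ I ∈ A, I.1 n}} ∧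
      ∀ (p : ℕ → ℕ) (A : Set (RI r)), A.Nonempty → IsClosed A →
        Enumerates p {n | ∃ I ∈ A, I.1 n} →
        ∃ I ∈ A, Enumerates (F p) {n | I.1 n} := by
  refine ⟨fun p => enumProj fun n k => r n (greedyChain r p k), ?_, ?_⟩
  · rintro p ⟨A, hA, -, hU⟩
    obtain ⟨hne, hstep⟩ := enumerated_nonempty_and_exists_rel hA hU
    refine (continuousAt_of_eventually_apply_eq fun m => ?_).continuousWithinAt
    filter_upwards [eventually_greedyChain_eq hne hstep m.unpair.2] with q hq
    simp only [enumProj]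
    congr 2
  · intro p A hA hcl hU
    have : IsTrans ℕ r := ⟨fun _ _ _ => @hr _ _ _⟩
    obtain ⟨hne, hstep⟩ := enumerated_nonempty_and_exists_rel hA hU
    have hchainA : ∀ k, ∃ I ∈ A, I.1 (greedyChain r p k) := fun k => by
      have hk := greedyChain_mem hne hstep k
      rwa [← show _ = enumerated p from hU] at hk
    exact ⟨_, below_chain_mem_of_isClosed (greedyChain_rel_succ hne hstep) hcl hchainA,
      enumerates_enumProj _⟩
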